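/- arXiv:2505.05372 — 2 statements merged into one kernel-verified Lean document; each statement's English description precedes it below -/
import Mathlib

section
/- Spherical source locus moment integral: let χ(x) = C δ(|x| − R) be the uniform surface density on the sphere of radius R in ℝ³, let r ∈ ℝ³ with |r| < R, let x be a point on the sphere, θ̂ the unit vector from x toward r, and φ = ∠(O, x, r) the angle at x between the directions to the origin O and to r. Then (1/2) ∫_{-∞}^{∞} s² χ(r + s θ̂) ds = C R² (cos(2φ) + (|r|/R)²) / |cos φ|. -/
/-!
Parametrise the line through `r` in the unit direction `θ` by `s ↦ r + s θ`. Its two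
intersections with the sphere are the roots of `s² + 2⟪θ, r⟫ s + ‖r‖² - R²`, so by Vieta
`θ·n̂` takes the values `±(s₁ - s₂)/(2R)` there, and `s₁² + s₂² = (s₁ - s₂)² + 2(‖r‖² - R²)`.
Since `x` lies on the same line, the chord length `|s₁ - s₂|` equals `2|⟪θ, x⟫| = 2R|cos φ|`.
-/

open Real InnerProductGeometry
open scoped RealInnerProductSpace

lemma add_eq_neg_and_mul_eq_of_sq_add_mul_add_eq_zero {p q s₁ s₂ : ℝ} (hs : s₁ ≠ s₂)
    (h₁ : s₁ ^ 2 + p * s₁ + q = 0) (h₂ : s₂ ^ 2 + p * s₂ + q = 0) :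
    s₁ + s₂ = -p ∧ s₁ * s₂ = q := by
  have hsum : s₁ + s₂ = -p := by
    have h : (s₁ - s₂) * (s₁ + s₂ + p) = 0 := by linear_combination h₁ - h₂
    rcases mul_eq_zero.mp h with h | h
    · exact absurd (sub_eq_zero.mp h) hs
    · linarith
  exact ⟨hsum, by linear_combination s₁ * hsum - h₁⟩

section LineSphere

variable {E : Type*} [NormedAddCommGroup E] [InnerProductSpace ℝ E]

lemma norm_add_smul_sq_of_norm_eq_one {θ : E} (hθ : ‖θ‖ = 1) (y : E) (s : ℝ) :
    ‖y + s • θ‖ ^ 2 = s ^ 2 + 2 * ⟪θ, y⟫ * s + ‖y‖ ^ 2 := by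
  rw [norm_add_sq_real, norm_smul, hθ, real_inner_smul_right, real_inner_comm, norm_eq_abs,
    mul_one, sq_abs]
  ring

/-- The discriminant of the quadratic cutting a line with a sphere about the origin does not
depend on the base point chosen on the line. -/
lemma inner_sq_sub_norm_sq_add_smul {θ : E} (hθ : ‖θ‖ = 1) (y : E) (t : ℝ) :
    ⟪θ, y + t • θ⟫ ^ 2 - ‖y + t • θ‖ ^ 2 = ⟪θ, y⟫ ^ 2 - ‖y‖ ^ 2 := by
  rw [norm_add_smul_sq_of_norm_eq_one hθ, inner_add_right, real_inner_smul_right,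
    real_inner_self_eq_norm_sq, hθ]
  ring

lemma inner_smul_add_smul_of_norm_eq_one {θ : E} (hθ : ‖θ‖ = 1) (c s : ℝ) (y : E) :
    ⟪θ, c • (y + s • θ)⟫ = c * (⟪θ, y⟫ + s) := by
  rw [real_inner_smul_right, inner_add_right, real_inner_smul_right, real_inner_self_eq_norm_sq,
    hθ, one_pow, mul_one]

lemma norm_mul_cos_angle_eq_inner {u v : E} (hv : v ≠ 0) :
    ‖u‖ * cos (angle u v) = ⟪u, ‖v‖⁻¹ • v⟫ := by
  rw [real_inner_smul_right, ← cos_angle_mul_norm_mul_norm]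
  field_simp [norm_ne_zero_iff.mpr hv]

lemma add_eq_and_mul_eq_of_norm_add_smul_eq {θ r : E} (hθ : ‖θ‖ = 1) {R s₁ s₂ : ℝ}
    (hs : s₁ ≠ s₂) (h₁ : ‖r + s₁ • θ‖ = R) (h₂ : ‖r + s₂ • θ‖ = R) :
    s₁ + s₂ = -(2 * ⟪θ, r⟫) ∧ s₁ * s₂ = ‖r‖ ^ 2 - R ^ 2 := by
  have hroot : ∀ s, ‖r + s • θ‖ = R → s ^ 2 + 2 * ⟪θ, r⟫ * s + (‖r‖ ^ 2 - R ^ 2) = 0 := by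
    intro s h
    linear_combination (norm_add_smul_sq_of_norm_eq_one hθ r s).symm.trans (by rw [h])
  exact add_eq_neg_and_mul_eq_of_sq_add_mul_add_eq_zero hs (hroot s₁ h₁) (hroot s₂ h₂)

end LineSphere

theorem stmt_15_general (R C : ℝ) (hR : 0 < R)
    (r x : EuclideanSpace ℝ (Fin 3)) (hr : ‖r‖ < R) (hx : ‖x‖ = R)
    (θ : EuclideanSpace ℝ (Fin 3)) (hθ : θ = ‖r - x‖⁻¹ • (r - x))
    (φ : ℝ) (hφ : φ = InnerProductGeometry.angle ((0 : EuclideanSpace ℝ (Fin 3)) - x) (r - x))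
    (s₁ s₂ : ℝ) (hs : s₁ ≠ s₂)
    (h₁ : ‖r + s₁ • θ‖ = R) (h₂ : ‖r + s₂ • θ‖ = R) :
    (1 / 2) * (C * s₁ ^ 2 / |(inner ℝ θ (R⁻¹ • (r + s₁ • θ)) : ℝ)| +
        C * s₂ ^ 2 / |(inner ℝ θ (R⁻¹ • (r + s₂ • θ)) : ℝ)|) =
      C * R ^ 2 * (Real.cos (2 * φ) + (‖r‖ / R) ^ 2) / |Real.cos φ| := by
  have hrx : r - x ≠ 0 := sub_ne_zero.mpr fun h => (h ▸ hx ▸ hr).false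
  have hθ₁ : ‖θ‖ = 1 := hθ ▸ norm_smul_inv_norm hrx
  obtain ⟨hsum, hprod⟩ := add_eq_and_mul_eq_of_norm_add_smul_eq hθ₁ hs h₁ h₂
  have hcos : R * cos φ = -⟪θ, x⟫ := by
    rw [hφ, ← hx, ← norm_neg x, ← zero_sub, norm_mul_cos_angle_eq_inner hrx, ← hθ,
      zero_sub, inner_neg_left, real_inner_comm]
  have hchord : (s₁ - s₂) ^ 2 = (2 * R * cos φ) ^ 2 := by
    have hr_line : r = x + ‖r - x‖ • θ := by
      rw [hθ, smul_inv_smul₀ (norm_ne_zero_iff.mpr hrx), add_sub_cancel]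
    have hdisc := inner_sq_sub_norm_sq_add_smul hθ₁ x ‖r - x‖
    rw [← hr_line, hx] at hdisc
    linear_combination (s₁ + s₂ - 2 * ⟪θ, r⟫) * hsum - 4 * hprod + 4 * hdisc -
      4 * (R * cos φ - ⟪θ, x⟫) * hcos
  have hnormal : ∀ s, (⟪θ, r⟫ + s) ^ 2 = (R * cos φ) ^ 2 →
      |⟪θ, R⁻¹ • (r + s • θ)⟫| = |cos φ| := by
    intro s h
    rw [inner_smul_add_smul_of_norm_eq_one hθ₁, abs_mul, (sq_eq_sq_iff_abs_eq_abs _ _).mp h,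
      abs_mul, abs_inv, abs_of_pos hR, inv_mul_cancel_left₀ hR.ne']
  have hmid : ⟪θ, r⟫ = -(s₁ + s₂) / 2 := by linarith
  rw [hnormal s₁ (by rw [hmid]; linear_combination hchord / 4),
    hnormal s₂ (by rw [hmid]; linear_combination hchord / 4), ← add_div, ← mul_div_assoc]
  congr 1
  rw [cos_two_mul]
  field_simp
  linear_combination C * hchord + 2 * C * hprod

/-- spherical source locus moment integral.  For the uniform surface
density `χ = C δ(|x| - R)` on the sphere of radius `R` in `ℝ³`, a point `r` with
`|r| < R`, a source point `x` on the sphere, `θ̂ = (r - x)/|r - x|` and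
`φ = ∠ O x r`, the line `{r + sθ̂}` meets the sphere at two points `r + sᵢθ̂` and
`(1/2)∫ s² χ(r + sθ̂) ds`, i.e. half the sum over the two intersection points of
`C sᵢ²/|θ̂·n̂(xᵢ)|` (with `n̂` the outward unit normal), equals
`C R² (cos 2φ + (|r|/R)²)/|cos φ|`. -/
theorem stmt_15 (R C : ℝ) (hR : 0 < R) (hC : 0 < C)
    (r x : EuclideanSpace ℝ (Fin 3)) (hr : ‖r‖ < R) (hx : ‖x‖ = R)
    (θ : EuclideanSpace ℝ (Fin 3)) (hθ : θ = ‖r - x‖⁻¹ • (r - x))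
    (φ : ℝ) (hφ : φ = InnerProductGeometry.angle ((0 : EuclideanSpace ℝ (Fin 3)) - x) (r - x))
    (s₁ s₂ : ℝ) (hs : s₁ ≠ s₂)
    (h₁ : ‖r + s₁ • θ‖ = R) (h₂ : ‖r + s₂ • θ‖ = R) :
    (1 / 2) * (C * s₁ ^ 2 / |(inner ℝ θ (R⁻¹ • (r + s₁ • θ)) : ℝ)| +
        C * s₂ ^ 2 / |(inner ℝ θ (R⁻¹ • (r + s₂ • θ)) : ℝ)|) =
      C * R ^ 2 * (Real.cos (2 * φ) + (‖r‖ / R) ^ 2) / |Real.cos φ| :=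
  stmt_15_general R C hR r x hr hx θ hθ φ hφ s₁ s₂ hs h₁ h₂
end

section
/- Cylindrical source locus moment integral: let χ(ρ,φ,z) = C δ(ρ − R) be the uniform surface density on the infinite cylinder of radius R in ℝ³ (cylindrical coordinates), let r be a point with ρ-coordinate r_ρ < R, x a point on the cylinder, θ̂ the unit vector from x toward r with polar angle θ (from the z-axis); let θ_h be the angle at the horizontal projection of x between the horizontal projections of r − x and of −x. Then (1/2) ∫_{-∞}^{∞} s² χ(r + s θ̂) ds = C R² csc³θ · (cos(2θ_h) + (r_ρ/R)²) / |cos θ_h|. -/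
/-!
Everything happens in the horizontal plane. Let `a` and `p` be the horizontal parts of `θ̂` and
`r`, so that `‖a‖ = sin θ`. The parameters `s` with `ρ(r + s θ̂) = R` are the roots of
`‖a‖² s² + 2⟪a, p⟫ s + ‖p‖² - R²`, and `x` itself is the root `s = -|r - x|`. At every root,
`⟪a, p + s a⟫²` equals the reduced discriminant `Δ`; this gives both `|θ̂ · n̂| = √Δ / R` at the
two intersection points and `|cos θ_h| = √Δ / (‖a‖ R)`. Vieta's formulas give `s₁² + s₂²`, and
the identity is then algebra.
-/

open InnerProductGeometry
open scoped RealInnerProductSpace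

section Chord

variable {E : Type*} [NormedAddCommGroup E] [InnerProductSpace ℝ E]

/-- The reduced discriminant of the quadratic `s ↦ ‖p + s • a‖ ^ 2 - R ^ 2`. -/
def chordDisc (a p : E) (R : ℝ) : ℝ := ⟪a, p⟫ ^ 2 - ‖a‖ ^ 2 * (‖p‖ ^ 2 - R ^ 2)

theorem quadratic_of_norm_add_smul_eq {a p : E} {R s : ℝ} (h : ‖p + s • a‖ = R) :
    ‖a‖ ^ 2 * s ^ 2 + 2 * ⟪a, p⟫ * s + (‖p‖ ^ 2 - R ^ 2) = 0 := by
  rw [← h, norm_add_sq_real, norm_smul, inner_smul_right, real_inner_comm, Real.norm_eq_abs,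
    mul_pow, sq_abs]
  ring

theorem inner_add_smul_sq_of_norm_eq {a p : E} {R s : ℝ} (h : ‖p + s • a‖ = R) :
    ⟪a, p + s • a⟫ ^ 2 = chordDisc a p R := by
  rw [inner_add_right, inner_smul_right, real_inner_self_eq_norm_sq, chordDisc]
  linear_combination ‖a‖ ^ 2 * quadratic_of_norm_add_smul_eq h

theorem abs_inner_add_smul_of_norm_eq {a p : E} {R s : ℝ} (h : ‖p + s • a‖ = R) :
    |⟪a, p + s • a⟫| = √(chordDisc a p R) := by
  rw [← Real.sqrt_sq_eq_abs, inner_add_smul_sq_of_norm_eq h]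

theorem sq_add_sq_of_norm_add_smul_eq {a p : E} {R s₁ s₂ : ℝ} (hs : s₁ ≠ s₂)
    (h₁ : ‖p + s₁ • a‖ = R) (h₂ : ‖p + s₂ • a‖ = R) :
    ‖a‖ ^ 4 * (s₁ ^ 2 + s₂ ^ 2) = 2 * (⟪a, p⟫ ^ 2 + chordDisc a p R) := by
  have q₁ := quadratic_of_norm_add_smul_eq h₁
  have q₂ := quadratic_of_norm_add_smul_eq h₂
  have hsum : ‖a‖ ^ 2 * (s₁ + s₂) = -2 * ⟪a, p⟫ :=
    mul_left_cancel₀ (sub_ne_zero.mpr hs) (by linear_combination q₁ - q₂)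
  have hprod : ‖a‖ ^ 2 * (s₁ * s₂) = ‖p‖ ^ 2 - R ^ 2 := by
    linear_combination s₁ * hsum - q₁
  rw [chordDisc]
  linear_combination (‖a‖ ^ 2 * (s₁ + s₂) - 2 * ⟪a, p⟫) * hsum - 2 * ‖a‖ ^ 2 * hprod

theorem chordDisc_pos {a p : E} {R : ℝ} (ha : a ≠ 0) (hp : ‖p‖ < R) : 0 < chordDisc a p R := by
  have hK : ‖p‖ ^ 2 - R ^ 2 < 0 := by nlinarith [norm_nonneg p]
  have hA : 0 < ‖a‖ ^ 2 := by positivity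
  rw [chordDisc]
  nlinarith [sq_nonneg ⟪a, p⟫]

theorem cos_angle_neg_of_norm_eq {a y : E} {R : ℝ} (h : ‖y‖ = R) :
    Real.cos (angle a (-y)) = -⟪a, y⟫ / (‖a‖ * R) := by
  rw [cos_angle, inner_neg_right, norm_neg, h]

theorem sq_cos_angle_neg_of_norm_eq {a p : E} {R t : ℝ} (h : ‖p + t • a‖ = R) :
    Real.cos (angle a (-(p + t • a))) ^ 2 = chordDisc a p R / (‖a‖ ^ 2 * R ^ 2) := by
  rw [cos_angle_neg_of_norm_eq h, div_pow, neg_sq, inner_add_smul_sq_of_norm_eq h, mul_pow]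

theorem abs_cos_angle_neg_of_norm_eq {a p : E} {R t : ℝ} (hR : 0 < R) (ha : a ≠ 0)
    (h : ‖p + t • a‖ = R) :
    |Real.cos (angle a (-(p + t • a)))| = √(chordDisc a p R) / (‖a‖ * R) := by
  rw [cos_angle_neg_of_norm_eq h, abs_div, abs_neg, abs_inner_add_smul_of_norm_eq h,
    abs_of_pos (by positivity)]

theorem chord_moment_eq {a p : E} {R C t s₁ s₂ : ℝ} (ha : a ≠ 0) (hp : ‖p‖ < R)
    (hs : s₁ ≠ s₂) (h₁ : ‖p + s₁ • a‖ = R) (h₂ : ‖p + s₂ • a‖ = R) (ht : ‖p + t • a‖ = R) :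
    (1 / 2) * (C * s₁ ^ 2 / |R⁻¹ * ⟪a, p + s₁ • a⟫| + C * s₂ ^ 2 / |R⁻¹ * ⟪a, p + s₂ • a⟫|) =
      C * R ^ 2 / ‖a‖ ^ 3 * ((Real.cos (2 * angle a (-(p + t • a))) + (‖p‖ / R) ^ 2) /
        |Real.cos (angle a (-(p + t • a)))|) := by
  have hR : 0 < R := (norm_nonneg p).trans_lt hp
  have habs_inner : ∀ s : ℝ, ‖p + s • a‖ = R →
      |R⁻¹ * ⟪a, p + s • a⟫| = √(chordDisc a p R) / R := fun s h ↦ by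
    rw [abs_mul, abs_inv, abs_of_pos hR, abs_inner_add_smul_of_norm_eq h, inv_mul_eq_div]
  have hss := sq_add_sq_of_norm_add_smul_eq hs h₁ h₂
  have hD : 0 < √(chordDisc a p R) := Real.sqrt_pos.mpr (chordDisc_pos ha hp)
  have ha0 : 0 < ‖a‖ := norm_pos_iff.mpr ha
  rw [habs_inner s₁ h₁, habs_inner s₂ h₂, abs_cos_angle_neg_of_norm_eq hR ha ht,
    Real.cos_two_mul, sq_cos_angle_neg_of_norm_eq ht]
  generalize √(chordDisc a p R) = D at hD
  rw [chordDisc] at hss ⊢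
  field_simp
  linear_combination C * hss

end Chord

def IsHorizontalProj (H : EuclideanSpace ℝ (Fin 3) → EuclideanSpace ℝ (Fin 3)) : Prop :=
  ∀ v i, H v i = if i = 2 then 0 else v i

namespace IsHorizontalProj

variable {H : EuclideanSpace ℝ (Fin 3) → EuclideanSpace ℝ (Fin 3)}

theorem map_add (hH : IsHorizontalProj H) (u v : EuclideanSpace ℝ (Fin 3)) :
    H (u + v) = H u + H v := by
  ext i; simp only [hH _ i, PiLp.add_apply]; split_ifs <;> simp

theorem map_smul (hH : IsHorizontalProj H) (c : ℝ) (v : EuclideanSpace ℝ (Fin 3)) :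
    H (c • v) = c • H v := by
  ext i; simp only [hH _ i, PiLp.smul_apply, smul_eq_mul]; split_ifs <;> simp

theorem map_sub (hH : IsHorizontalProj H) (u v : EuclideanSpace ℝ (Fin 3)) :
    H (u - v) = H u - H v := by
  ext i; simp only [hH _ i, PiLp.sub_apply]; split_ifs <;> simp

theorem map_neg (hH : IsHorizontalProj H) (v : EuclideanSpace ℝ (Fin 3)) : H (-v) = -H v := by
  ext i; simp only [hH _ i, PiLp.neg_apply]; split_ifs <;> simp

theorem inner_map_right (hH : IsHorizontalProj H) (u v : EuclideanSpace ℝ (Fin 3)) :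
    ⟪u, H v⟫ = ⟪H u, H v⟫ := by
  simp [PiLp.inner_apply, Fin.sum_univ_three, hH _ _]

theorem norm_map_sq (hH : IsHorizontalProj H) (v : EuclideanSpace ℝ (Fin 3)) :
    ‖H v‖ ^ 2 = ‖v‖ ^ 2 - v 2 ^ 2 := by
  simp [EuclideanSpace.norm_sq_eq, Fin.sum_univ_three, hH _ _]

end IsHorizontalProj

theorem stmt_16_general (R C : ℝ)
    (H : EuclideanSpace ℝ (Fin 3) → EuclideanSpace ℝ (Fin 3))
    (hH : ∀ v i, H v i = if i = 2 then 0 else v i)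
    (r x : EuclideanSpace ℝ (Fin 3)) (hr : ‖H r‖ < R) (hx : ‖H x‖ = R)
    (θv : EuclideanSpace ℝ (Fin 3)) (hθv : θv = ‖r - x‖⁻¹ • (r - x))
    (hnz : |θv 2| < 1)
    (θ : ℝ) (hθ : θ = Real.arccos (θv 2))
    (θh : ℝ) (hθh : θh = InnerProductGeometry.angle (H (r - x)) (H ((0 : EuclideanSpace ℝ (Fin 3)) - x)))
    (s₁ s₂ : ℝ) (hs : s₁ ≠ s₂)
    (h₁ : ‖H (r + s₁ • θv)‖ = R) (h₂ : ‖H (r + s₂ • θv)‖ = R) :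
    (1 / 2) * (C * s₁ ^ 2 / |(inner ℝ θv (R⁻¹ • H (r + s₁ • θv)) : ℝ)| +
        C * s₂ ^ 2 / |(inner ℝ θv (R⁻¹ • H (r + s₂ • θv)) : ℝ)|) =
      C * R ^ 2 / (Real.sin θ) ^ 3 *
        ((Real.cos (2 * θh) + (‖H r‖ / R) ^ 2) / |Real.cos θh|) := by
  replace hH : IsHorizontalProj H := hH
  have hL : 0 < ‖r - x‖ := norm_pos_iff.mpr <| sub_ne_zero.mpr fun h ↦ hr.ne (h ▸ hx)
  have hθv_norm : ‖θv‖ = 1 := by rw [hθv, norm_smul, norm_inv, norm_norm, inv_mul_cancel₀ hL.ne']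
  set L := ‖r - x‖
  have hrx : r - x = L • θv := by rw [hθv, smul_inv_smul₀ hL.ne']
  set a := H θv
  have ha_sq : ‖a‖ ^ 2 = 1 - θv 2 ^ 2 := by rw [hH.norm_map_sq, hθv_norm, one_pow]
  have ha : a ≠ 0 := by
    rwa [← norm_ne_zero_iff, ← sq_pos_iff, ha_sq, sub_pos, sq_lt_one_iff_abs_lt_one]
  have hsin : Real.sin θ = ‖a‖ := by
    rw [hθ, Real.sin_arccos, ← ha_sq, Real.sqrt_sq (norm_nonneg _)]
  have hx' : H x = H r + (-L) • a := by
    rw [neg_smul, ← sub_eq_add_neg, ← hH.map_smul, ← hrx, hH.map_sub, sub_sub_cancel]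
  have hθh' : θh = angle a (-(H r + (-L) • a)) := by
    rw [hθh, zero_sub, hH.map_neg, hrx, hH.map_smul, angle_smul_left_of_pos _ _ hL, hx']
  have hinner : ∀ s : ℝ, inner ℝ θv (R⁻¹ • H (r + s • θv)) = R⁻¹ * ⟪a, H r + s • a⟫ :=
    fun s ↦ by rw [real_inner_smul_right, hH.inner_map_right, hH.map_add, hH.map_smul]
  rw [hH.map_add, hH.map_smul] at h₁ h₂
  rw [hinner, hinner, hsin, hθh']
  exact chord_moment_eq ha hr hs h₁ h₂ (hx' ▸ hx)

/-- cylindrical source locus moment integral.  For the uniform surface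
density `χ = C δ(ρ - R)` on the infinite cylinder `{ρ = R}` in `ℝ³` (with `H` the
horizontal projection, so `ρ(v) = ‖H v‖`), a point `r` with `r_ρ < R`, a source point
`x` on the cylinder, `θ̂ = (r - x)/|r - x|` with polar angle `θ = arccos(θ̂_z)`
(not parallel to the `z`-axis), and `θ_h` the angle between the horizontal projections
of `r - x` and `-x`, the line meets the cylinder at two points `r + sᵢθ̂` and
`(1/2)∫ s² χ(r + sθ̂) ds = Σᵢ C sᵢ²/(2|θ̂·n̂(xᵢ)|)` (with `n̂` the outward horizontal
unit normal) equals `C R² csc³θ (cos 2θ_h + (r_ρ/R)²)/|cos θ_h|`. -/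
theorem stmt_16 (R C : ℝ) (hR : 0 < R) (hC : 0 < C)
    (H : EuclideanSpace ℝ (Fin 3) → EuclideanSpace ℝ (Fin 3))
    (hH : ∀ v i, H v i = if i = 2 then 0 else v i)
    (r x : EuclideanSpace ℝ (Fin 3)) (hr : ‖H r‖ < R) (hx : ‖H x‖ = R)
    (θv : EuclideanSpace ℝ (Fin 3)) (hθv : θv = ‖r - x‖⁻¹ • (r - x))
    (hnz : |θv 2| < 1)
    (θ : ℝ) (hθ : θ = Real.arccos (θv 2))
    (θh : ℝ) (hθh : θh = InnerProductGeometry.angle (H (r - x)) (H ((0 : EuclideanSpace ℝ (Fin 3)) - x)))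
    (s₁ s₂ : ℝ) (hs : s₁ ≠ s₂)
    (h₁ : ‖H (r + s₁ • θv)‖ = R) (h₂ : ‖H (r + s₂ • θv)‖ = R) :
    (1 / 2) * (C * s₁ ^ 2 / |(inner ℝ θv (R⁻¹ • H (r + s₁ • θv)) : ℝ)| +
        C * s₂ ^ 2 / |(inner ℝ θv (R⁻¹ • H (r + s₂ • θv)) : ℝ)|) =
      C * R ^ 2 / (Real.sin θ) ^ 3 *
        ((Real.cos (2 * θh) + (‖H r‖ / R) ^ 2) / |Real.cos θh|) :=
  stmt_16_general R C H hH r x hr hx θv hθv hnz θ hθ θh hθh s₁ s₂ hs h₁ h₂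
end
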